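/- (Global convergence with rate for bad regularity.) Let b ≥ 3 be an odd integer and consider gradient descent on f_b with initial condition (x₀,y₀) satisfying x₀y₀ > 2^{1/(b−1)} and x₀² + y₀² ≥ 4, and learning rate h = C/((x₀² + y₀² + 4)(x₀y₀)^{2b−2}) for some 2 ≤ C ≤ 4 such that (1 + h²ℓ₀²)x₀y₀ − hℓ₀(x₀² + y₀²) > 0, where ℓ₀ = F_b'(x₀y₀). Assume no iterate satisfies x_k y_k = 1 (the excluded initial conditions form a Lebesgue measure-zero set). Then GD converges to a global minimizer (x_∞, y_∞) with x_∞ y_∞ = 1, and for all k ≥ 1, |x_k y_k − 1| ≤ |x₁y₁ − 1|·S^{k−1}, where S = 1 − h(2 − hℓ₀) if r₀ > 0 and S = 1 − h(2 − h)q₁x₁y₁ otherwise, with q₁ = F_b'(x₁y₁)/(x₁y₁ − 1); moreover 0 < S < 1. -/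

import Mathlib

/-!
Gradient descent on `f_b` closes up on `p = xy` and `d = x² + y² ≥ 2p`, and `F_b'(p) = q(p)(p - 1)`
with `q > 0`, so `p' - 1 = r (p - 1)` with `r = 1 - h q(p) (d - h F_b'(p) p)`. The choice of `h`
gives `h (d₀ + 4) ≤ 1` and `h F_b'(p₀) (d₀ + 4) ≤ 2 p₀`.

If `r₀ > 0`, then `p` decreases towards `1` from above, `d` and `q(p) (d - h F_b'(p) p)` decrease,
so every `r_k` stays positive, and `q ≥ 1`, `d ≥ 2p` give `r_k ≤ 1 - h (2 - h F_b'(p₀))`.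
If `r₀ ≤ 0`, the first step lands in `0 < p₁ < 1`; from then on `p` increases towards `1` while
`d + 3 (1 - p)` decreases, so `d ≤ d₀ + 3` and the small step keeps `r_k` in
`(0, 1 - 2h q(p₁) p₁]`.

Either way `|p_k - 1|` decays geometrically, hence so do the steps `h |F_b'(p_k)| |(y_k, x_k)|`:
the iterates form a Cauchy sequence, and their limit satisfies `xy = 1`.
-/

open Filter

/-- `F_b(s) = (1 - s^b)^2 / (2 b^2)` for an odd positive integer `b`. -/
noncomputable def Fb (b : ℕ) (s : ℝ) : ℝ := (1 - s ^ b) ^ 2 / (2 * (b : ℝ) ^ 2)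

open Finset

/-- The paper's `q_k` is `qb b (x_k y_k)`. -/
noncomputable def qb (b : ℕ) (t : ℝ) : ℝ := t ^ (b - 1) * (∑ i ∈ range b, t ^ i) / b

section Fb

variable {b : ℕ} {t : ℝ}

theorem deriv_Fb_eq_pow (b : ℕ) (t : ℝ) : deriv (Fb b) t = t ^ (b - 1) * (t ^ b - 1) / b := by
  rcases Nat.eq_zero_or_pos b with rfl | hb
  · have : Fb 0 = fun _ => 0 := funext fun s => by simp [Fb]
    simp [this]
  have hF : HasDerivAt (Fb b)
      (2 * (1 - t ^ b) * -((b : ℝ) * t ^ (b - 1)) / (2 * (b : ℝ) ^ 2)) t :=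
    (((hasDerivAt_pow b t).const_sub 1).pow 2).div_const _ |>.congr_deriv (by simp)
  rw [hF.deriv]
  field_simp
  ring

theorem deriv_Fb (b : ℕ) (t : ℝ) : deriv (Fb b) t = qb b t * (t - 1) := by
  rw [deriv_Fb_eq_pow, qb, ← geom_sum_mul]
  ring

theorem qb_pos (hb : 1 ≤ b) (ht : 0 < t) : 0 < qb b t := by
  have := geom_sum_pos (n := b) ht.le (by omega)
  unfold qb
  positivity

theorem qb_nonneg (ht : 0 ≤ t) : 0 ≤ qb b t := by
  unfold qb
  positivity

theorem one_le_qb (hb : 1 ≤ b) (ht : 1 ≤ t) : 1 ≤ qb b t := by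
  have hsum : (b : ℝ) ≤ ∑ i ∈ range b, t ^ i := by
    simpa using card_nsmul_le_sum (range b) (t ^ ·) 1 fun i _ => one_le_pow₀ ht
  have hpow : 1 ≤ t ^ (b - 1) := one_le_pow₀ ht
  rw [qb, le_div_iff₀ (by positivity)]
  nlinarith

theorem qb_le_self (hb : 2 ≤ b) (h0 : 0 ≤ t) (h1 : t ≤ 1) : qb b t ≤ t := by
  have hsum : ∑ i ∈ range b, t ^ i ≤ b := by
    simpa using sum_le_card_nsmul (range b) (t ^ ·) 1 fun i _ => pow_le_one₀ h0 h1
  have hpow : t ^ (b - 1) ≤ t := by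
    simpa using pow_le_pow_of_le_one h0 h1 (show 1 ≤ b - 1 by omega)
  rw [qb, div_le_iff₀ (by positivity)]
  have := geom_sum_pos (n := b) h0 (by omega)
  nlinarith [pow_nonneg h0 (b - 1)]

theorem qb_monotoneOn : MonotoneOn (qb b) (Set.Ici 0) := by
  intro s (hs : 0 ≤ s) t _ hst
  unfold qb
  gcongr
  exact pow_nonneg (hs.trans hst) _

theorem deriv_Fb_monotoneOn : MonotoneOn (deriv (Fb b)) (Set.Ici 1) := by
  intro s (hs : 1 ≤ s) t _ hst
  rw [deriv_Fb, deriv_Fb]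
  exact mul_le_mul (qb_monotoneOn (by simp; linarith) (by simp; linarith) hst) (by linarith)
    (by linarith) (qb_nonneg (by linarith))

theorem two_mul_deriv_Fb_le (hb : 2 ≤ b) (ht : 0 ≤ t) : 2 * deriv (Fb b) t ≤ t ^ (2 * b - 1) := by
  have hpow : t ^ (2 * b - 1) = t ^ (b - 1) * t ^ b := by
    rw [← pow_add]; congr 1; omega
  have hb' : (2 : ℝ) ≤ b := by exact_mod_cast hb
  rw [deriv_Fb_eq_pow, hpow, mul_div_assoc', div_le_iff₀ (by positivity)]
  nlinarith [pow_nonneg ht (b - 1), pow_nonneg ht b,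
    mul_nonneg (pow_nonneg ht (b - 1)) (pow_nonneg ht b)]

end Fb

theorem lt_pow_of_rpow_inv_lt {a p : ℝ} {n : ℕ} (hn : n ≠ 0) (ha : 0 ≤ a)
    (hp : a ^ ((1 : ℝ) / n) < p) : a < p ^ n := by
  have hp0 : 0 ≤ p := (Real.rpow_nonneg ha _).trans hp.le
  rwa [one_div, Real.rpow_inv_lt_iff_of_pos ha hp0 (by positivity), Real.rpow_natCast] at hp

theorem learningRate_bounds {b : ℕ} (hb : 2 ≤ b) {C h p d : ℝ}
    (hp : (2 : ℝ) ^ ((1 : ℝ) / ((b : ℝ) - 1)) < p) (hd : 2 * p ≤ d) (hC0 : 0 < C) (hC : C ≤ 4)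
    (hh : h = C / ((d + 4) * p ^ (2 * b - 2))) :
    1 < p ∧ 0 < h ∧ h * (d + 4) ≤ 1 ∧ h * deriv (Fb b) p * (d + 4) ≤ 2 * p := by
  have hp2 : 2 < p ^ (b - 1) := by
    refine lt_pow_of_rpow_inv_lt (by omega) zero_le_two ?_
    rwa [Nat.cast_sub (by omega), Nat.cast_one]
  have hp1 : 1 < p := by
    by_contra! hle
    have hp0 : 0 ≤ p := (Real.rpow_nonneg zero_le_two _).trans hp.le
    linarith [pow_le_one₀ hp0 hle (n := b - 1)]
  have hP : 4 < p ^ (2 * b - 2) := by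
    rw [show 2 * b - 2 = (b - 1) * 2 by omega, pow_mul]
    nlinarith
  have hd4 : 0 < d + 4 := by linarith
  have hhP : h * (d + 4) * p ^ (2 * b - 2) = C := by
    rw [hh]
    field_simp
  have hh0 : 0 < h := by
    rw [hh]
    exact div_pos hC0 (by positivity)
  have hℓ : 2 * deriv (Fb b) p ≤ p ^ (2 * b - 2) * p := by
    rw [← pow_succ, show 2 * b - 2 + 1 = 2 * b - 1 by omega]
    exact two_mul_deriv_Fb_le hb (by linarith)
  refine ⟨hp1, hh0, ?_, ?_⟩
  · nlinarith [mul_pos hh0 hd4]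
  · nlinarith [mul_pos hh0 hd4]

/-- The paper's `r_k`, for `p = x_k y_k` and `d = x_k² + y_k²`. -/
noncomputable def rb (b : ℕ) (h p d : ℝ) : ℝ := 1 - h * qb b p * (d - h * deriv (Fb b) p * p)

theorem rb_le_of_one_le {b : ℕ} {h p d P : ℝ} (hb : 1 ≤ b) (hh : 0 ≤ h) (hp : 1 ≤ p) (hpP : p ≤ P)
    (hd : 2 * p ≤ d) (hP : h * deriv (Fb b) P ≤ 2) :
    rb b h p d ≤ 1 - h * (2 - h * deriv (Fb b) P) := by
  have hℓ : h * deriv (Fb b) p ≤ h * deriv (Fb b) P :=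
    mul_le_mul_of_nonneg_left (deriv_Fb_monotoneOn hp (hp.trans hpP) hpP) hh
  have hE : 2 - h * deriv (Fb b) P ≤ d - h * deriv (Fb b) p * p := by nlinarith
  have hq := one_le_qb hb hp
  unfold rb
  nlinarith [mul_le_mul_of_nonneg_left hE hh,
    mul_nonneg (mul_nonneg hh (sub_nonneg.2 hq)) (show 0 ≤ d - h * deriv (Fb b) p * p by linarith)]

def ContractsWith (b : ℕ) (h : ℝ) (p d : ℕ → ℝ) (S : ℝ) : Prop :=
  0 < S ∧ S < 1 ∧ ∀ k, 1 ≤ k → 0 < p k ∧ p k ≤ p 0 ∧ d k ≤ d 0 + 3 ∧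
    0 < rb b h (p k) (d k) ∧ rb b h (p k) (d k) ≤ S

/-- The pair `(x_k y_k, x_k² + y_k²)` along gradient descent on `f_b` with step `h`. -/
structure IsReducedOrbit (b : ℕ) (h : ℝ) (p d : ℕ → ℝ) : Prop where
  two_mul_le (k : ℕ) : 2 * p k ≤ d k
  succ_p (k : ℕ) :
    p (k + 1) = (1 + h ^ 2 * deriv (Fb b) (p k) ^ 2) * p k - h * deriv (Fb b) (p k) * d k
  succ_d (k : ℕ) :
    d (k + 1) = (1 + h ^ 2 * deriv (Fb b) (p k) ^ 2) * d k - 4 * h * deriv (Fb b) (p k) * p k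

theorem isReducedOrbit_of_gd {b : ℕ} {h : ℝ} {x y : ℕ → ℝ}
    (hGD : ∀ k, x (k + 1) = x k - h * deriv (Fb b) (x k * y k) * y k ∧
      y (k + 1) = y k - h * deriv (Fb b) (x k * y k) * x k) :
    IsReducedOrbit b h (fun k => x k * y k) (fun k => x k ^ 2 + y k ^ 2) where
  two_mul_le k := by nlinarith [sq_nonneg (x k - y k)]
  succ_p k := by simp only [(hGD k).1, (hGD k).2]; ring
  succ_d k := by simp only [(hGD k).1, (hGD k).2]; ring

namespace IsReducedOrbit

variable {b : ℕ} {h : ℝ} {p d : ℕ → ℝ}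

theorem succ_p_sub_one (hO : IsReducedOrbit b h p d) (k : ℕ) :
    p (k + 1) - 1 = rb b h (p k) (d k) * (p k - 1) := by
  rw [hO.succ_p, rb, deriv_Fb]
  ring

theorem succ_le_of_one_lt (hO : IsReducedOrbit b h p d) (hb : 1 ≤ b) (hh : 0 < h) {k : ℕ}
    (hp : 1 < p k) (hhℓ : h * deriv (Fb b) (p k) < 1) (hr : 0 < rb b h (p k) (d k)) :
    1 < p (k + 1) ∧ p (k + 1) ≤ p k ∧ d (k + 1) ≤ d k - h * deriv (Fb b) (p k) * p k := by
  set ℓ := deriv (Fb b) (p k)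
  have hr' : 0 < 1 - h * qb b (p k) * (d k - h * ℓ * p k) := hr
  have hq := qb_pos hb (by linarith : 0 < p k)
  have hℓ : ℓ = qb b (p k) * (p k - 1) := deriv_Fb b (p k)
  have hℓ0 : 0 < ℓ := hℓ ▸ mul_pos hq (by linarith)
  have h2p := hO.two_mul_le k
  have hu : 0 < h * qb b (p k) * (d k - h * ℓ * p k) := by
    have : 0 < d k - h * ℓ * p k := by nlinarith
    positivity
  have hrec := hO.succ_p_sub_one k
  unfold rb at hrec
  -- `0 < r_k`, multiplied by `p k - 1`, says `h ℓ (d - h ℓ p) < p - 1`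
  have hℓd : h * ℓ * d k < 2 * p k := by
    have : h * ℓ * (d k - h * ℓ * p k) < p k - 1 := by
      rw [hℓ] at hr' ⊢; linear_combination mul_pos hr' (sub_pos.2 hp)
    nlinarith [mul_pos (mul_pos hh hℓ0) (by linarith : 0 < p k)]
  refine ⟨by nlinarith, by nlinarith, ?_⟩
  rw [hO.succ_d]
  nlinarith [mul_pos hh hℓ0]

theorem step_of_one_lt (hO : IsReducedOrbit b h p d) (hb : 1 ≤ b) (hh : 0 < h) {P : ℝ}
    (hP : h * deriv (Fb b) P < 1) {k : ℕ} (hp : 1 < p k) (hpP : p k ≤ P)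
    (hr : 0 < rb b h (p k) (d k)) :
    1 < p (k + 1) ∧ p (k + 1) ≤ p k ∧ d (k + 1) ≤ d k ∧ 0 < rb b h (p (k + 1)) (d (k + 1)) := by
  have hhℓ {s : ℝ} (hs : 1 ≤ s) (hsP : s ≤ P) : h * deriv (Fb b) s < 1 :=
    (mul_le_mul_of_nonneg_left (deriv_Fb_monotoneOn hs (hs.trans hsP) hsP) hh.le).trans_lt hP
  have hℓ0 {s : ℝ} (hs : 1 ≤ s) : 0 ≤ h * deriv (Fb b) s := by
    rw [deriv_Fb]
    exact mul_nonneg hh.le (mul_nonneg (qb_nonneg (by linarith)) (by linarith))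
  obtain ⟨hp', hpp, hd'⟩ := hO.succ_le_of_one_lt hb hh hp (hhℓ hp.le hpP) hr
  refine ⟨hp', hpp, by nlinarith [hℓ0 hp.le], ?_⟩
  have hq' := qb_monotoneOn (b := b) (by simp; linarith) (by simp; linarith) hpp
  have h2p' := hO.two_mul_le (k + 1)
  have hE : 0 ≤ d (k + 1) - h * deriv (Fb b) (p (k + 1)) * p (k + 1) := by
    nlinarith [hhℓ hp'.le (hpp.trans hpP)]
  have : h * qb b (p (k + 1)) * (d (k + 1) - h * deriv (Fb b) (p (k + 1)) * p (k + 1)) ≤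
      h * qb b (p k) * (d k - h * deriv (Fb b) (p k) * p k) :=
    mul_le_mul (mul_le_mul_of_nonneg_left hq' hh.le)
      (by nlinarith [mul_nonneg (hℓ0 hp'.le) (by linarith : 0 ≤ p (k + 1))]) hE
      (mul_nonneg hh.le (qb_nonneg (by linarith)))
  unfold rb at hr ⊢
  linarith

theorem step_of_lt_one (hO : IsReducedOrbit b h p d) (hb : 2 ≤ b) (hh : 0 < h) {D : ℝ}
    (hD : h * (D + 1) ≤ 1) {k : ℕ} (hp0 : 0 < p k) (hp1 : p k < 1) (hd : d k ≤ D) :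
    0 < rb b h (p k) (d k) ∧ rb b h (p k) (d k) ≤ 1 - 2 * h * (qb b (p k) * p k) ∧
      d (k + 1) + 3 * (1 - p (k + 1)) ≤ d k + 3 * (1 - p k) := by
  set ℓ := deriv (Fb b) (p k) with hℓ_def
  set q := qb b (p k)
  have hq0 : 0 < q := qb_pos (by omega) hp0
  have hqp : q ≤ p k := qb_le_self hb hp0.le hp1.le
  have hℓ : ℓ = q * (p k - 1) := deriv_Fb b (p k)
  have hℓ0 : ℓ < 0 := hℓ ▸ mul_neg_of_pos_of_neg hq0 (by linarith)
  have hℓ1 : -1 ≤ ℓ := by nlinarith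
  have h2p := hO.two_mul_le k
  have hh1 : h < 1 := by nlinarith
  have hdℓ : 0 ≤ -(h * ℓ * p k) := by nlinarith [mul_neg_of_pos_of_neg hh hℓ0]
  refine ⟨?_, ?_, ?_⟩
  · show 0 < 1 - h * q * (d k - h * ℓ * p k)
    have hℓp : -(h * ℓ * p k) ≤ h := by
      have := mul_le_one₀ (neg_le.1 hℓ1) hp0.le hp1.le
      nlinarith
    suffices h * q * (d k - h * ℓ * p k) < 1 by linarith
    calc h * q * (d k - h * ℓ * p k) ≤ h * (d k - h * ℓ * p k) :=
          mul_le_mul_of_nonneg_right (mul_le_of_le_one_right hh.le (by linarith)) (by linarith)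
      _ ≤ h * (D + h) := mul_le_mul_of_nonneg_left (by linarith) hh.le
      _ < h * (D + 1) := mul_lt_mul_of_pos_left (by linarith) hh
      _ ≤ 1 := hD
  · show 1 - h * q * (d k - h * ℓ * p k) ≤ 1 - 2 * h * (q * p k)
    nlinarith [mul_pos hh hq0]
  · -- with `a = -h ℓ ∈ [0, 1]`, the increment of `d + 3 (1 - p)` is `a (a d + 4p - 3ap - 3d)`
    have ha : 0 ≤ -(h * ℓ) := by nlinarith
    have inner : -(h * ℓ) * d k + 4 * p k - 3 * -(h * ℓ) * p k - 3 * d k ≤ 0 := by nlinarith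
    rw [hO.succ_d, hO.succ_p, ← hℓ_def]
    nlinarith [mul_nonpos_of_nonneg_of_nonpos ha inner]

theorem contractsWith_of_rb_pos (hO : IsReducedOrbit b h p d) (hb : 1 ≤ b) (hh : 0 < h)
    (hhd : h * (d 0 + 4) ≤ 1) (hp0 : 1 < p 0) (hℓ0 : h * deriv (Fb b) (p 0) < 1)
    (hr0 : 0 < rb b h (p 0) (d 0)) :
    ContractsWith b h p d (1 - h * (2 - h * deriv (Fb b) (p 0))) := by
  have inv (k : ℕ) : 1 < p k ∧ p k ≤ p 0 ∧ d k ≤ d 0 ∧ 0 < rb b h (p k) (d k) := by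
    induction k with
    | zero => exact ⟨hp0, le_rfl, le_rfl, hr0⟩
    | succ k ih =>
      obtain ⟨hp, hpP, hd, hr⟩ := ih
      obtain ⟨hp', hpp, hd', hr'⟩ := hO.step_of_one_lt hb hh hℓ0 hp hpP hr
      exact ⟨hp', hpp.trans hpP, hd'.trans hd, hr'⟩
  have hℓ0_pos : 0 < deriv (Fb b) (p 0) := by
    rw [deriv_Fb]; exact mul_pos (qb_pos hb (by linarith)) (by linarith)
  have h2p := hO.two_mul_le 0
  refine ⟨by nlinarith [mul_pos hh hℓ0_pos], by nlinarith, fun k _ => ?_⟩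
  obtain ⟨hp, hpP, hd, hr⟩ := inv k
  exact ⟨by linarith, hpP, by linarith, hr,
    rb_le_of_one_le hb hh.le hp.le hpP (hO.two_mul_le k) (by linarith)⟩

theorem contractsWith_of_rb_nonpos (hO : IsReducedOrbit b h p d) (hb : 2 ≤ b) (hh : 0 < h)
    (hhd : h * (d 0 + 4) ≤ 1) (hp0 : 1 < p 0) (hℓ0 : h * deriv (Fb b) (p 0) * (d 0 + 4) ≤ 2 * p 0)
    (hp1 : 0 < p 1) (hp1_ne : p 1 ≠ 1) (hr0 : rb b h (p 0) (d 0) ≤ 0) :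
    ContractsWith b h p d (1 - h * (2 - h) * qb b (p 1) * p 1) := by
  have hp1_lt : p 1 < 1 := by
    refine lt_of_le_of_ne ?_ hp1_ne
    nlinarith [hO.succ_p_sub_one 0]
  have hℓ0_pos : 0 < deriv (Fb b) (p 0) := by
    rw [deriv_Fb]; exact mul_pos (qb_pos (by omega) (by linarith)) (by linarith)
  have h2p := hO.two_mul_le 0
  have hd1 : d 1 ≤ d 0 := by
    rw [hO.succ_d 0]
    nlinarith [mul_pos hh hℓ0_pos]
  have hstep {k : ℕ} (hp : 0 < p k) (hp' : p k < 1) (hd : d k ≤ d 0 + 3) :=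
    hO.step_of_lt_one hb hh (D := d 0 + 3) (by linarith) hp hp' hd
  have inv : ∀ k, 1 ≤ k → p 1 ≤ p k ∧ p k < 1 ∧ d k + 3 * (1 - p k) ≤ d 1 + 3 * (1 - p 1) := by
    refine Nat.le_induction ⟨le_rfl, hp1_lt, le_rfl⟩ fun k _ ⟨hp, hp', hV⟩ => ?_
    obtain ⟨hr, hr1, hV'⟩ := hstep (by linarith) hp' (by linarith)
    have hrec := hO.succ_p_sub_one k
    have hr1' : rb b h (p k) (d k) ≤ 1 := by
      nlinarith [mul_nonneg (qb_nonneg (b := b) (by linarith : 0 ≤ p k)) (by linarith : 0 ≤ p k)]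
    refine ⟨?_, by nlinarith [mul_neg_of_pos_of_neg hr (sub_neg.2 hp')], by linarith⟩
    nlinarith [mul_nonneg (sub_nonneg.2 hr1') (sub_nonneg.2 hp'.le)]
  set Q := qb b (p 1) * p 1
  have hQ0 : 0 < Q := mul_pos (qb_pos (by omega) hp1) hp1
  have hQ1 : Q < 1 := by
    have := qb_le_self hb hp1.le hp1_lt.le
    nlinarith
  have hh4 : h < 1 / 4 := by nlinarith
  have hS : 1 - h * (2 - h) * qb b (p 1) * p 1 = 1 - h * (2 - h) * Q := by ring
  rw [hS]
  refine ⟨by nlinarith [mul_pos hh hQ0], by nlinarith [mul_pos hh hQ0], fun k hk => ?_⟩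
  obtain ⟨hp, hp', hV⟩ := inv k hk
  obtain ⟨hr, hr1, -⟩ := hstep (by linarith) hp' (by linarith)
  have hmono : Q ≤ qb b (p k) * p k :=
    mul_le_mul (qb_monotoneOn hp1.le (hp1.le.trans hp) hp) hp hp1.le (qb_nonneg (by linarith))
  refine ⟨by linarith, by linarith, by linarith, hr, ?_⟩
  nlinarith [mul_le_mul_of_nonneg_left hmono (by linarith : 0 ≤ 2 * h), mul_pos (mul_pos hh hh) hQ0]

end IsReducedOrbit

theorem ContractsWith.abs_sub_one_le {b : ℕ} {h S : ℝ} {p d : ℕ → ℝ} (hO : IsReducedOrbit b h p d)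
    (hc : ContractsWith b h p d S) (n : ℕ) : |p (n + 1) - 1| ≤ |p 1 - 1| * S ^ n := by
  induction n with
  | zero => simp
  | succ n ih =>
    obtain ⟨-, -, -, hr, hrS⟩ := hc.2.2 (n + 1) (by omega)
    rw [hO.succ_p_sub_one, abs_mul, abs_of_pos hr, pow_succ]
    nlinarith [abs_nonneg (p (n + 1) - 1), abs_nonneg (p 1 - 1)]

theorem exists_tendsto_of_geometric {x y ℓ : ℕ → ℝ} {h K S D : ℝ}
    (hx : ∀ k, x (k + 1) = x k - h * ℓ k * y k) (hy : ∀ k, y (k + 1) = y k - h * ℓ k * x k)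
    (hS : S < 1) (hD : ∀ k, x k ^ 2 + y k ^ 2 ≤ D) (hℓ : ∀ n, |ℓ (n + 1)| ≤ K * S ^ n) :
    ∃ z, Tendsto (fun k => (x k, y k)) atTop (nhds z) := by
  have hstep (n : ℕ) : dist (x (n + 1), y (n + 1)) (x (n + 1 + 1), y (n + 1 + 1)) ≤
      |h| * √D * K * S ^ n := by
    have hmove {u v : ℝ} (hv : v ^ 2 ≤ D) :
        dist u (u - h * ℓ (n + 1) * v) ≤ |h| * √D * K * S ^ n := by
      rw [Real.dist_eq, sub_sub_cancel, abs_mul, abs_mul]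
      calc |h| * |ℓ (n + 1)| * |v| ≤ |h| * (K * S ^ n) * √D :=
            mul_le_mul (mul_le_mul_of_nonneg_left (hℓ n) (abs_nonneg h)) (Real.abs_le_sqrt hv)
              (abs_nonneg v) (mul_nonneg (abs_nonneg h) ((abs_nonneg _).trans (hℓ n)))
        _ = _ := by ring
    have hx2 : x (n + 1) ^ 2 ≤ D := by nlinarith [hD (n + 1), sq_nonneg (y (n + 1))]
    have hy2 : y (n + 1) ^ 2 ≤ D := by nlinarith [hD (n + 1), sq_nonneg (x (n + 1))]
    rw [Prod.dist_eq, hx (n + 1), hy (n + 1)]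
    exact max_le (hmove hy2) (hmove hx2)
  obtain ⟨z, hz⟩ := cauchySeq_tendsto_of_complete (cauchySeq_of_le_geometric S _ hS hstep)
  exact ⟨z, (tendsto_add_atTop_iff_nat 1).1 hz⟩

theorem ContractsWith.exists_tendsto_mul_eq_one {b : ℕ} {h S : ℝ} {x y : ℕ → ℝ}
    (hGD : ∀ k, x (k + 1) = x k - h * deriv (Fb b) (x k * y k) * y k ∧
      y (k + 1) = y k - h * deriv (Fb b) (x k * y k) * x k)
    (hc : ContractsWith b h (fun k => x k * y k) (fun k => x k ^ 2 + y k ^ 2) S) :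
    ∃ xl yl : ℝ, Tendsto (fun k => (x k, y k)) atTop (nhds (xl, yl)) ∧ xl * yl = 1 := by
  have hrate := hc.abs_sub_one_le (isReducedOrbit_of_gd hGD)
  obtain ⟨hS0, hS1, hk⟩ := hc
  have hℓ (n : ℕ) : |deriv (Fb b) (x (n + 1) * y (n + 1))| ≤
      qb b (x 0 * y 0) * |x 1 * y 1 - 1| * S ^ n := by
    obtain ⟨hp, hpP, -⟩ := hk (n + 1) (by omega)
    rw [deriv_Fb, abs_mul, abs_of_nonneg (qb_nonneg hp.le), mul_assoc]
    exact mul_le_mul (qb_monotoneOn hp.le (hp.le.trans hpP) hpP) (hrate n) (abs_nonneg _)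
      (qb_nonneg (hp.le.trans hpP))
  have hD (k : ℕ) : x k ^ 2 + y k ^ 2 ≤ x 0 ^ 2 + y 0 ^ 2 + 3 := by
    rcases k with _ | k
    · linarith
    · exact (hk (k + 1) (by omega)).2.2.1
  obtain ⟨⟨xl, yl⟩, hz⟩ :=
    exists_tendsto_of_geometric (fun k => (hGD k).1) (fun k => (hGD k).2) hS1 hD hℓ
  have hp : Tendsto (fun k => x k * y k) atTop (nhds 1) := by
    refine (tendsto_add_atTop_iff_nat 1).1 (tendsto_sub_nhds_zero_iff.1 ?_)
    refine squeeze_zero_norm hrate ?_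
    simpa using (tendsto_pow_atTop_nhds_zero_of_lt_one hS0.le hS1).const_mul |x 1 * y 1 - 1|
  exact ⟨xl, yl, hz,
    tendsto_nhds_unique ((continuous_fst.mul continuous_snd).tendsto _ |>.comp hz) hp⟩

theorem stmt_6_general (b : ℕ) (hb : 3 ≤ b) (C h : ℝ)
    (x y : ℕ → ℝ)
    (hinit1 : x 0 * y 0 > (2 : ℝ) ^ ((1 : ℝ) / ((b : ℝ) - 1)))
    (hC1 : 2 ≤ C) (hC2 : C ≤ 4)
    (hh : h = C / ((x 0 ^ 2 + y 0 ^ 2 + 4) * (x 0 * y 0) ^ (2 * b - 2)))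
    (ℓ₀ : ℝ) (hℓ₀ : ℓ₀ = deriv (Fb b) (x 0 * y 0))
    (hM3 : (1 + h ^ 2 * ℓ₀ ^ 2) * (x 0 * y 0) - h * ℓ₀ * (x 0 ^ 2 + y 0 ^ 2) > 0)
    (hGD : ∀ k, x (k + 1) = x k - h * deriv (Fb b) (x k * y k) * y k ∧
                y (k + 1) = y k - h * deriv (Fb b) (x k * y k) * x k)
    (hne : ∀ k, x k * y k ≠ 1)
    (r₀ : ℝ)
    (hr₀ : r₀ = 1 - h * (ℓ₀ / (x 0 * y 0 - 1)) * ((x 0 ^ 2 + y 0 ^ 2) - h * ℓ₀ * (x 0 * y 0)))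
    (q₁ : ℝ) (hq₁ : q₁ = deriv (Fb b) (x 1 * y 1) / (x 1 * y 1 - 1))
    (S : ℝ)
    (hS : S = if 0 < r₀ then 1 - h * (2 - h * ℓ₀) else 1 - h * (2 - h) * q₁ * (x 1 * y 1)) :
    (∃ xl yl : ℝ, Tendsto (fun k => (x k, y k)) atTop (nhds (xl, yl)) ∧ xl * yl = 1) ∧
    0 < S ∧ S < 1 ∧
    (∀ k : ℕ, 1 ≤ k → |x k * y k - 1| ≤ |x 1 * y 1 - 1| * S ^ (k - 1)) := by
  have hO := isReducedOrbit_of_gd hGD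
  obtain ⟨hp0, hh0, hhd, hℓ0⟩ :=
    learningRate_bounds (by omega : 2 ≤ b) hinit1 (hO.two_mul_le 0) (by linarith) hC2 hh
  have hr₀' : r₀ = rb b h (x 0 * y 0) (x 0 ^ 2 + y 0 ^ 2) := by
    rw [hr₀, hℓ₀, rb, deriv_Fb, mul_div_cancel_right₀ _ (sub_ne_zero.2 (hne 0))]
  have hq₁' : q₁ = qb b (x 1 * y 1) := by
    rw [hq₁, deriv_Fb, mul_div_cancel_right₀ _ (sub_ne_zero.2 (hne 1))]
  have hp1 : 0 < x 1 * y 1 := by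
    rw [show x 1 * y 1 = _ from hO.succ_p 0, ← hℓ₀]
    exact hM3
  have hc : ContractsWith b h (fun k => x k * y k) (fun k => x k ^ 2 + y k ^ 2) S := by
    rw [hS, hr₀', hq₁', hℓ₀]
    split_ifs with hr
    · exact hO.contractsWith_of_rb_pos (by omega) hh0 hhd hp0 (by nlinarith [hO.two_mul_le 0]) hr
    · exact hO.contractsWith_of_rb_nonpos (by omega) hh0 hhd hp0 hℓ0 hp1 (hne 1) (not_lt.1 hr)
  refine ⟨hc.exists_tendsto_mul_eq_one hGD, hc.1, hc.2.1, fun k hk => ?_⟩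
  obtain ⟨n, rfl⟩ := Nat.exists_eq_add_of_le' hk
  simpa using hc.abs_sub_one_le hO n

/-- Global convergence of GD with an explicit geometric rate for the bad
regularity functions `f_b`, `b ≥ 3` odd, under the large learning rate
`h = C/((x₀²+y₀²+4)(x₀y₀)^{2b-2})`, `2 ≤ C ≤ 4`. -/
theorem stmt_6 (b : ℕ) (hodd : Odd b) (hb : 3 ≤ b) (C h : ℝ)
    (x y : ℕ → ℝ)
    (hinit1 : x 0 * y 0 > (2 : ℝ) ^ ((1 : ℝ) / ((b : ℝ) - 1)))
    (hinit2 : x 0 ^ 2 + y 0 ^ 2 ≥ 4)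
    (hC1 : 2 ≤ C) (hC2 : C ≤ 4)
    (hh : h = C / ((x 0 ^ 2 + y 0 ^ 2 + 4) * (x 0 * y 0) ^ (2 * b - 2)))
    (ℓ₀ : ℝ) (hℓ₀ : ℓ₀ = deriv (Fb b) (x 0 * y 0))
    (hM3 : (1 + h ^ 2 * ℓ₀ ^ 2) * (x 0 * y 0) - h * ℓ₀ * (x 0 ^ 2 + y 0 ^ 2) > 0)
    (hGD : ∀ k, x (k + 1) = x k - h * deriv (Fb b) (x k * y k) * y k ∧
                y (k + 1) = y k - h * deriv (Fb b) (x k * y k) * x k)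
    (hne : ∀ k, x k * y k ≠ 1)
    (r₀ : ℝ)
    (hr₀ : r₀ = 1 - h * (ℓ₀ / (x 0 * y 0 - 1)) * ((x 0 ^ 2 + y 0 ^ 2) - h * ℓ₀ * (x 0 * y 0)))
    (q₁ : ℝ) (hq₁ : q₁ = deriv (Fb b) (x 1 * y 1) / (x 1 * y 1 - 1))
    (S : ℝ)
    (hS : S = if 0 < r₀ then 1 - h * (2 - h * ℓ₀) else 1 - h * (2 - h) * q₁ * (x 1 * y 1)) :
    (∃ xl yl : ℝ, Tendsto (fun k => (x k, y k)) atTop (nhds (xl, yl)) ∧ xl * yl = 1) ∧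
    0 < S ∧ S < 1 ∧
    (∀ k : ℕ, 1 ≤ k → |x k * y k - 1| ≤ |x 1 * y 1 - 1| * S ^ (k - 1)) :=
  stmt_6_general b hb C h x y hinit1 hC1 hC2 hh ℓ₀ hℓ₀ hM3 hGD hne r₀ hr₀ q₁ hq₁ S hS
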